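/- arXiv:1811.01520 — 4 statements merged into one kernel-verified Lean document; each statement's English description precedes it below -/
import Mathlib

section
/- Let Z be a real random variable with mean μ and second moment v² = E Z² < ∞. Then for any τ > 0, E[exp(ψ_τ(Z)/τ)] ≤ exp(μ/τ + v²/τ²), where ψ_τ(u) = sign(u)·min(|u|,τ). -/
open MeasureTheory

/-- Truncation operator ψ_τ(u) = sign(u)·min(|u|, τ). -/
noncomputable def psi (τ u : ℝ) : ℝ := Real.sign u * min |u| τ

lemma psi_eq_max_min {τ : ℝ} (hτ : 0 ≤ τ) (u : ℝ) : psi τ u = max (-τ) (min u τ) := by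
  rcases lt_trichotomy u 0 with hu | rfl | hu
  · rw [psi, Real.sign_of_neg hu, abs_of_neg hu, neg_one_mul, ← max_neg_neg, neg_neg,
      min_eq_left (hu.le.trans hτ), max_comm]
  · simp [psi, hτ]
  · rw [psi, Real.sign_of_pos hu, abs_of_pos hu, one_mul,
      max_eq_right ((neg_nonpos.2 hτ).trans (le_min hu.le hτ))]

lemma continuous_psi {τ : ℝ} (hτ : 0 ≤ τ) : Continuous (psi τ) := by
  rw [funext (psi_eq_max_min hτ)]
  fun_prop

lemma psi_div_self {τ : ℝ} (hτ : 0 < τ) (u : ℝ) : psi τ u / τ = psi 1 (u / τ) := by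
  rw [psi_eq_max_min hτ.le, psi_eq_max_min zero_le_one, div_eq_iff hτ.ne',
    max_mul_of_nonneg _ _ hτ.le, min_mul_of_nonneg _ _ hτ.le, div_mul_cancel₀ _ hτ.ne']
  simp

lemma Real.exp_le_one_add_add_sq {x : ℝ} (hx : |x| ≤ 1) : Real.exp x ≤ 1 + x + x ^ 2 := by
  linarith [(abs_le.1 (Real.abs_exp_sub_one_sub_id_le hx)).2]

lemma exp_psi_one_le (x : ℝ) : Real.exp (psi 1 x) ≤ 1 + x + x ^ 2 := by
  rw [psi_eq_max_min zero_le_one]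
  set y := max (-1) (min x 1) with hy
  have hy_abs : |y| ≤ 1 := abs_le.2 ⟨le_max_left _ _, max_le (by norm_num) (min_le_right _ _)⟩
  -- `y` is `x` clamped to `[-1, 1]`, and `t ↦ t + t ^ 2` does not decrease when `t` is moved
  -- away from `[-1, 1]`
  have hclamp : y + y ^ 2 ≤ x + x ^ 2 := by
    rcases le_total x (-1) with hx | hx
    · rw [hy, min_eq_left (by linarith), max_eq_left hx]; nlinarith
    rcases le_total x 1 with hx' | hx'
    · rw [hy, min_eq_left hx', max_eq_right hx]
    · rw [hy, min_eq_right hx', max_eq_right (by norm_num)]; nlinarith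
  linarith [Real.exp_le_one_add_add_sq hy_abs]

theorem stmt3_general {Ω : Type*} [MeasurableSpace Ω] (μ : Measure Ω) [IsProbabilityMeasure μ]
    (Z : Ω → ℝ) (hint : Integrable Z μ)
    (hint2 : Integrable (fun ω => Z ω ^ 2) μ) (τ : ℝ) (hτ : 0 < τ) :
    ∫ ω, Real.exp (psi τ (Z ω) / τ) ∂μ
      ≤ Real.exp ((∫ ω, Z ω ∂μ) / τ + (∫ ω, Z ω ^ 2 ∂μ) / τ ^ 2) := by
  have hpoint (ω : Ω) : Real.exp (psi τ (Z ω) / τ) ≤ 1 + Z ω / τ + Z ω ^ 2 / τ ^ 2 := by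
    simpa only [psi_div_self hτ, div_pow] using exp_psi_one_le (Z ω / τ)
  have hint_affine : Integrable (fun ω => 1 + Z ω / τ) μ :=
    (integrable_const 1).add (hint.div_const τ)
  have hint_bound : Integrable (fun ω => 1 + Z ω / τ + Z ω ^ 2 / τ ^ 2) μ :=
    hint_affine.add (hint2.div_const (τ ^ 2))
  have hint_exp : Integrable (fun ω => Real.exp (psi τ (Z ω) / τ)) μ := by
    refine hint_bound.mono' ?_ (ae_of_all _ fun ω => ?_)
    · have : Continuous fun u => Real.exp (psi τ u / τ) := by
        have := continuous_psi hτ.le; fun_prop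
      exact this.comp_aestronglyMeasurable hint.aestronglyMeasurable
    · rw [Real.norm_of_nonneg (Real.exp_pos _).le]
      exact hpoint ω
  calc ∫ ω, Real.exp (psi τ (Z ω) / τ) ∂μ
      ≤ ∫ ω, (1 + Z ω / τ + Z ω ^ 2 / τ ^ 2) ∂μ :=
        integral_mono hint_exp hint_bound hpoint
    _ = 1 + (∫ ω, Z ω ∂μ) / τ + (∫ ω, Z ω ^ 2 ∂μ) / τ ^ 2 := by
        rw [integral_add hint_affine (hint2.div_const _), integral_add (integrable_const 1)
          (hint.div_const τ), integral_div, integral_div]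
        simp
    _ ≤ Real.exp ((∫ ω, Z ω ∂μ) / τ + (∫ ω, Z ω ^ 2 ∂μ) / τ ^ 2) := by
      linarith [Real.add_one_le_exp ((∫ ω, Z ω ∂μ) / τ + (∫ ω, Z ω ^ 2 ∂μ) / τ ^ 2)]

theorem stmt3 {Ω : Type*} [MeasurableSpace Ω] (μ : Measure Ω) [IsProbabilityMeasure μ]
    (Z : Ω → ℝ) (hmeas : Measurable Z) (hint : Integrable Z μ)
    (hint2 : Integrable (fun ω => Z ω ^ 2) μ) (τ : ℝ) (hτ : 0 < τ) :
    ∫ ω, Real.exp (psi τ (Z ω) / τ) ∂μ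
      ≤ Real.exp ((∫ ω, Z ω ∂μ) / τ + (∫ ω, Z ω ^ 2 ∂μ) / τ ^ 2) :=
  stmt3_general μ Z hint hint2 τ hτ
end

section
/- For any σ > 0, n ≥ 1, d ≥ 1, and δ ∈ (0, (2e)⁻¹), there exists a distribution on ℝ^d with mean μ and covariance matrix σ²I_d such that the sample mean X̄ of n i.i.d. observations from this distribution satisfies, with probability at least δ, ‖X̄ − μ‖_∞ ≥ σ·√(d/(nδ))·(1 − 2eδ/n)^{(n−1)/2}. -/
open MeasureTheory
open scoped ENNReal

/-!
The witness puts mass `1 - 2dc` at the origin and mass `c` at each of the `2d` spikes `±a eⱼ`,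
with `a = nη` and `c = σ²/(2a²)`, so it is centred with covariance `σ² I`. If exactly one of the
`n` samples is a spike and all others vanish, the sample mean is a spike divided by `n`, of sup
norm `η`; this event has probability `n q (1 - q)^(n-1)` with `q = 2dc = δ / (n b^(n-1))` and
`b = 1 - 2eδ/n`. Since `b ≥ 1 - 1/n` and `(1 - 1/n)^(n-1) ≥ e⁻¹`, we get `q ≤ eδ/n ≤ 1 - b`, so
`(1 - q)^(n-1) ≥ b^(n-1)` and the probability is at least `δ`.
-/

lemma Real.exp_neg_one_le_one_sub_inv_pow (n : ℕ) :
    Real.exp (-1) ≤ (1 - (n : ℝ)⁻¹) ^ (n - 1) := by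
  obtain _ | m := n
  · simp
  rcases m.eq_zero_or_pos with rfl | hm
  · simp
  have hm' : (0 : ℝ) < m := by exact_mod_cast hm
  have h : 1 - ((m + 1 : ℕ) : ℝ)⁻¹ = (1 + (m : ℝ)⁻¹)⁻¹ := by
    push_cast; field_simp; ring
  rw [h, Nat.add_sub_cancel, inv_pow, Real.exp_neg]
  exact inv_anti₀ (by positivity) Real.one_add_inv_pow_le_exp

lemma Real.exp_neg_one_le_one_sub_pow {n : ℕ} {t : ℝ} (ht : t ≤ (n : ℝ)⁻¹) :
    Real.exp (-1) ≤ (1 - t) ^ (n - 1) :=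
  (Real.exp_neg_one_le_one_sub_inv_pow n).trans
    (pow_le_pow_left₀ (sub_nonneg.2 (Nat.cast_inv_le_one n)) (by linarith) _)

lemma one_sub_two_exp_mul_div_pos {n : ℕ} (hn : 1 ≤ n) {δ : ℝ} (hδ0 : 0 ≤ δ)
    (hδ : 2 * Real.exp 1 * δ < 1) : 0 < 1 - 2 * Real.exp 1 * δ / n := by
  have : 2 * Real.exp 1 * δ / n ≤ 2 * Real.exp 1 * δ :=
    div_le_self (by positivity) (by exact_mod_cast hn)
  linarith

lemma le_mul_mul_one_sub_pow {n : ℕ} (hn : 1 ≤ n) {δ : ℝ} (hδ0 : 0 < δ)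
    (hδ : 2 * Real.exp 1 * δ < 1) {b q : ℝ} (hb : b = 1 - 2 * Real.exp 1 * δ / n)
    (hq : q = δ / (n * b ^ (n - 1))) :
    q ≤ 1 ∧ δ ≤ n * q * (1 - q) ^ (n - 1) := by
  have hn0 : (0 : ℝ) < n := by exact_mod_cast hn
  have hb0 : 0 < b := hb ▸ one_sub_two_exp_mul_div_pos hn hδ0.le hδ
  have hbpow : Real.exp (-1) ≤ b ^ (n - 1) :=
    hb ▸ Real.exp_neg_one_le_one_sub_pow (by rw [← one_div]; gcongr)
  have hq0 : 0 ≤ q := by rw [hq]; positivity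
  have hqb : q ≤ 1 - b :=
    calc q ≤ δ / (n * Real.exp (-1)) := by rw [hq]; gcongr
      _ = Real.exp 1 * δ / n := by rw [Real.exp_neg]; field_simp
      _ ≤ 1 - b := by rw [hb, sub_sub_cancel]; gcongr; linarith [Real.exp_pos 1]
  have hnqb : n * q * b ^ (n - 1) = δ := by rw [hq]; field_simp
  refine ⟨by linarith, ?_⟩
  calc δ = n * q * b ^ (n - 1) := hnqb.symm
    _ ≤ n * q * (1 - q) ^ (n - 1) := by gcongr; linarith

lemma MeasureTheory.Measure.pi_iUnion_univ_pi_ite {ι α : Type*} [Fintype ι] [DecidableEq ι]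
    [MeasurableSpace α] (P : Measure α) [SigmaFinite P] {A B : Set α} (hA : MeasurableSet A)
    (hB : MeasurableSet B) (hAB : Disjoint A B) :
    Measure.pi (fun _ : ι => P) (⋃ i, Set.univ.pi fun k => if k = i then A else B) =
      Fintype.card ι * (P A * P B ^ (Fintype.card ι - 1)) := by
  have hdisj : Pairwise (Function.onFun Disjoint fun i : ι =>
      Set.univ.pi fun k => if k = i then A else B) := by
    intro i i' hii'
    refine Set.disjoint_left.2 fun x hx hx' => hAB.notMem_of_mem_left ?_ ?_ (a := x i)
    · simpa using hx i (Set.mem_univ i)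
    · simpa [hii'] using hx' i (Set.mem_univ i)
  have hmeas : ∀ i : ι, MeasurableSet (Set.univ.pi fun k => if k = i then A else B) :=
    fun i => .univ_pi fun k => by split_ifs <;> assumption
  have hbox : ∀ i : ι, Measure.pi (fun _ : ι => P) (Set.univ.pi fun k => if k = i then A else B) =
      P A * P B ^ (Fintype.card ι - 1) := by
    intro i
    rw [Measure.pi_pi, Fintype.prod_eq_mul_prod_compl i, if_pos rfl,
      Finset.prod_congr rfl fun k hk =>
        congrArg P (if_neg (Finset.mem_compl.1 hk ∘ Finset.mem_singleton.2)),
      Finset.prod_const, Finset.card_compl, Finset.card_singleton]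
  rw [measure_iUnion hdisj hmeas, tsum_fintype, Finset.sum_congr rfl fun i _ => hbox i,
    Finset.sum_const, Finset.card_univ, nsmul_eq_mul]

section SpikeMeasure

variable {d : ℕ}

noncomputable def spikeMeasure (d : ℕ) (c a : ℝ) : Measure (Fin d → ℝ) :=
  ENNReal.ofReal (1 - 2 * d * c) • Measure.dirac 0 +
    ∑ j, ENNReal.ofReal c •
      (Measure.dirac (Pi.single j a : Fin d → ℝ) + Measure.dirac (Pi.single j (-a)))

def spikes (d : ℕ) (a : ℝ) : Set (Fin d → ℝ) := ⋃ j, {Pi.single j a, Pi.single j (-a)}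

lemma integral_spikeMeasure {c : ℝ} (hc : 0 ≤ c) (hcd : 2 * d * c ≤ 1) (a : ℝ)
    (f : (Fin d → ℝ) → ℝ) :
    ∫ v, f v ∂spikeMeasure d c a =
      (1 - 2 * d * c) * f 0 + c * ∑ j, (f (Pi.single j a) + f (Pi.single j (-a))) := by
  have hint : ∀ v, Integrable f (Measure.dirac v) := fun v => integrable_dirac enorm_lt_top
  have hint_pair : ∀ j, Integrable f (ENNReal.ofReal c •
      (Measure.dirac (Pi.single j a : Fin d → ℝ) + Measure.dirac (Pi.single j (-a)))) :=
    fun j => ((hint _).add_measure (hint _)).smul_measure ENNReal.ofReal_ne_top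
  rw [spikeMeasure, integral_add_measure ((hint 0).smul_measure ENNReal.ofReal_ne_top)
    (integrable_finsetSum_measure.2 fun j _ => hint_pair j),
    integral_finsetSum_measure fun j _ => hint_pair j, Finset.mul_sum]
  simp only [integral_smul_measure, integral_add_measure (hint _) (hint _), integral_dirac,
      ENNReal.toReal_ofReal hc, ENNReal.toReal_ofReal (sub_nonneg.2 hcd), smul_eq_mul]

lemma spikeMeasure_apply (c a : ℝ) (s : Set (Fin d → ℝ)) :
    spikeMeasure d c a s = ENNReal.ofReal (1 - 2 * d * c) * s.indicator 1 0 +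
      ∑ j, ENNReal.ofReal c *
        (s.indicator 1 (Pi.single j a : Fin d → ℝ) + s.indicator 1 (Pi.single j (-a))) := by
  simp only [spikeMeasure, Measure.add_apply, Measure.smul_apply, Measure.coe_finsetSum,
    Finset.sum_apply, Measure.dirac_apply, smul_eq_mul]

lemma sum_ofReal_mul_one_add_one (c : ℝ) :
    ∑ _j : Fin d, ENNReal.ofReal c * (1 + 1) = ENNReal.ofReal (2 * d * c) := by
  rw [Finset.sum_const, Finset.card_univ, Fintype.card_fin, nsmul_eq_mul,
    ENNReal.ofReal_mul (by positivity), ENNReal.ofReal_mul zero_le_two, ENNReal.ofReal_natCast,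
    ENNReal.ofReal_ofNat, one_add_one_eq_two]
  ring

lemma isProbabilityMeasure_spikeMeasure {c : ℝ} (hc : 0 ≤ c) (hcd : 2 * d * c ≤ 1) (a : ℝ) :
    IsProbabilityMeasure (spikeMeasure d c a) := by
  constructor
  simp only [spikeMeasure_apply, Set.indicator_univ, Pi.one_apply, mul_one,
    sum_ofReal_mul_one_add_one c]
  rw [← ENNReal.ofReal_add (sub_nonneg.2 hcd) (by positivity), sub_add_cancel, ENNReal.ofReal_one]

lemma zero_notMem_spikes {a : ℝ} (ha : a ≠ 0) : (0 : Fin d → ℝ) ∉ spikes d a := by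
  simp [spikes, eq_comm (a := (0 : Fin d → ℝ)), ha]

lemma spikeMeasure_spikes {c a : ℝ} (ha : a ≠ 0) :
    spikeMeasure d c a (spikes d a) = ENNReal.ofReal (2 * d * c) := by
  have hmem : ∀ j (b : ℝ), b = a ∨ b = -a → (Pi.single j b : Fin d → ℝ) ∈ spikes d a := by
    rintro j b (rfl | rfl) <;> exact Set.mem_iUnion.2 ⟨j, by simp⟩
  simp only [spikeMeasure_apply, Set.indicator_of_notMem (zero_notMem_spikes ha),
    Set.indicator_of_mem (hmem _ _ (Or.inl rfl)), Set.indicator_of_mem (hmem _ _ (Or.inr rfl)),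
    Pi.one_apply, mul_zero, zero_add, sum_ofReal_mul_one_add_one c]

lemma spikeMeasure_zero {c a : ℝ} (ha : a ≠ 0) :
    spikeMeasure d c a {0} = ENNReal.ofReal (1 - 2 * d * c) := by
  simp [spikeMeasure_apply, ha]

lemma norm_of_mem_spikes {a : ℝ} {v : Fin d → ℝ} (hv : v ∈ spikes d a) : ‖v‖ = |a| := by
  obtain ⟨j, hj⟩ := Set.mem_iUnion.1 hv
  rcases hj with rfl | rfl <;> simp [Pi.norm_single]

lemma integral_eval_spikeMeasure {c : ℝ} (hc : 0 ≤ c) (hcd : 2 * d * c ≤ 1) (a : ℝ)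
    (k : Fin d) :
    ∫ v, v k ∂spikeMeasure d c a = 0 := by
  simp [integral_spikeMeasure hc hcd, Pi.single_neg]

lemma integral_eval_mul_eval_spikeMeasure {c : ℝ} (hc : 0 ≤ c) (hcd : 2 * d * c ≤ 1) (a : ℝ)
    (k l : Fin d) :
    ∫ v, v k * v l ∂spikeMeasure d c a = if k = l then 2 * c * a ^ 2 else 0 := by
  rw [integral_spikeMeasure hc hcd]
  simp only [Pi.single_neg, Pi.neg_apply, neg_mul_neg, ← two_mul, ← Finset.mul_sum]
  split_ifs with hkl
  · subst hkl; simp [Pi.single_apply]; ring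
  · simp [Pi.single_apply, hkl]

lemma measurableSet_spikes (a : ℝ) : MeasurableSet (spikes d a) :=
  .iUnion fun _ => (Set.toFinite _).measurableSet

lemma iUnion_univ_pi_spikes_subset (n : ℕ) (a : ℝ) :
    (⋃ i : Fin n, Set.univ.pi fun k => if k = i then spikes d a else {0}) ⊆
      {x | |a| / n ≤ ‖(n : ℝ)⁻¹ • ∑ i, x i‖} := by
  intro x hx
  obtain ⟨i, hi⟩ := Set.mem_iUnion.1 hx
  rw [Set.mem_univ_pi] at hi
  have hsum : ∑ k, x k = x i :=
    Finset.sum_eq_single i (fun k _ hk => by simpa [hk] using hi k) (by simp)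
  have hxi : ‖x i‖ = |a| := norm_of_mem_spikes (by simpa using hi i)
  simp [hsum, norm_smul, hxi, div_eq_inv_mul]

lemma ofReal_le_pi_spikeMeasure {c a : ℝ} (hc : 0 ≤ c) (hcd : 2 * d * c ≤ 1) (ha : a ≠ 0)
    (n : ℕ) :
    ENNReal.ofReal (n * (2 * d * c) * (1 - 2 * d * c) ^ (n - 1)) ≤
      Measure.pi (fun _ : Fin n => spikeMeasure d c a)
        {x | |a| / n ≤ ‖(n : ℝ)⁻¹ • ∑ i, x i‖} := by
  have := isProbabilityMeasure_spikeMeasure hc hcd a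
  calc ENNReal.ofReal (n * (2 * d * c) * (1 - 2 * d * c) ^ (n - 1))
      = Measure.pi (fun _ : Fin n => spikeMeasure d c a)
          (⋃ i : Fin n, Set.univ.pi fun k => if k = i then spikes d a else {0}) := by
        rw [Measure.pi_iUnion_univ_pi_ite _ (measurableSet_spikes a) (measurableSet_singleton 0)
            (Set.disjoint_singleton_right.2 (zero_notMem_spikes ha)),
          spikeMeasure_spikes ha, spikeMeasure_zero ha, Fintype.card_fin,
          ENNReal.ofReal_mul (by positivity), ENNReal.ofReal_mul (by positivity),
          ENNReal.ofReal_pow (sub_nonneg.2 hcd), ENNReal.ofReal_natCast, mul_assoc]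
    _ ≤ _ := measure_mono (iUnion_univ_pi_spikes_subset n a)

end SpikeMeasure

theorem stmt6 (σ : ℝ) (hσ : 0 < σ) (n d : ℕ) (hn : 1 ≤ n) (hd : 1 ≤ d)
    (δ : ℝ) (hδ0 : 0 < δ) (hδ : δ < (2 * Real.exp 1)⁻¹) :
    ∃ (P : Measure (Fin d → ℝ)) (_ : IsProbabilityMeasure P) (mu : Fin d → ℝ),
      (∀ k, ∫ v, v k ∂P = mu k) ∧
      (∀ k l, ∫ v, (v k - mu k) * (v l - mu l) ∂P = if k = l then σ ^ 2 else 0) ∧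
      ENNReal.ofReal δ ≤
        (Measure.pi fun _ : Fin n => P)
          {x | σ * Real.sqrt (d / (n * δ)) *
                 (1 - 2 * Real.exp 1 * δ / n) ^ (((n : ℝ) - 1) / 2)
               ≤ ‖(n : ℝ)⁻¹ • (∑ i, x i) - mu‖} := by
  set b := 1 - 2 * Real.exp 1 * δ / n with hb_def
  clear_value b
  set η := σ * Real.sqrt (d / (n * δ)) * b ^ (((n : ℝ) - 1) / 2)
  have hn0 : (0 : ℝ) < n := by exact_mod_cast hn
  have hd0 : (0 : ℝ) < d := by exact_mod_cast hd
  have h2eδ : 2 * Real.exp 1 * δ < 1 :=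
    (lt_inv_mul_iff₀ (by positivity)).1 (by rwa [mul_one])
  have hb : 0 < b := hb_def ▸ one_sub_two_exp_mul_div_pos hn hδ0.le h2eδ
  have hη2 : η ^ 2 = σ ^ 2 * (d / (n * δ)) * b ^ (n - 1) := by
    rw [mul_pow, mul_pow, Real.sq_sqrt (by positivity), ← Real.rpow_natCast (b ^ _) 2,
      ← Real.rpow_mul hb.le, ← Real.rpow_natCast b (n - 1), Nat.cast_sub hn]
    norm_num
  have hη : 0 < η := by positivity
  set c := σ ^ 2 / (2 * (n * η) ^ 2)
  have hc : 0 ≤ c := by positivity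
  obtain ⟨hcd, htail⟩ := le_mul_mul_one_sub_pow hn hδ0 h2eδ hb_def (q := 2 * d * c) (by
    simp only [c, mul_pow, hη2]; field_simp)
  have hca : 2 * c * (n * η) ^ 2 = σ ^ 2 := by simp only [c]; field_simp
  refine ⟨spikeMeasure d c (n * η), isProbabilityMeasure_spikeMeasure hc hcd _, 0,
    integral_eval_spikeMeasure hc hcd _, fun k l => ?_, ?_⟩
  · simp only [Pi.zero_apply, sub_zero]
    rw [integral_eval_mul_eval_spikeMeasure hc hcd, hca]
  · have ha : 0 < (n * η : ℝ) := by positivity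
    refine (ENNReal.ofReal_le_ofReal htail).trans
      ((ofReal_le_pi_spikeMeasure hc hcd ha.ne' n).trans_eq ?_)
    simp only [abs_of_pos ha, mul_div_cancel_left₀ _ hn0.ne', sub_zero, η]
end

section
/- Let Σ̂ be a symmetric d×d matrix with eigendecomposition Σ̂ = ∑_{k=1}^d λ_k v_k v_kᵀ (λ₁ ≥ … ≥ λ_d, {v_k} orthonormal). Then for γ > 0, the matrix A* = ∑_{k=1}^d max(λ_k − γ, 0) v_k v_kᵀ is a minimizer over the set S_d of positive semi-definite d×d matrices of the objective A ↦ (1/2)‖A − Σ̂‖_F² + γ·tr(A). -/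
/-!
The objective `f A = ½‖A - Ŝ‖²_F + γ tr A` is a convex quadratic, so with the gradient
`G = B - Ŝ + γ I` at `B` one has `f A - f B = ½‖A - B‖²_F + ⟨A, G⟩_F - ⟨B, G⟩_F`.
At `B = A*`, completeness of the orthonormal basis (`∑ vₖ vₖᵀ = I`) gives
`G = ∑ max (γ - λₖ) 0 • vₖ vₖᵀ`, a positive semidefinite matrix, so `⟨A, G⟩_F ≥ 0` for every
positive semidefinite `A`, while `⟨A*, G⟩_F = ∑ max (λₖ - γ) 0 * max (γ - λₖ) 0 = 0`.
-/

open Matrix Finset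

namespace Matrix

variable {m n ι : Type*} [Fintype m] [Fintype n] [Fintype ι]

def frobeniusInner (A B : Matrix m n ℝ) : ℝ := ∑ i, ∑ j, A i j * B i j

lemma frobeniusInner_sum_smul (A : Matrix m n ℝ) (w : ι → ℝ) (B : ι → Matrix m n ℝ) :
    frobeniusInner A (∑ k, w k • B k) = ∑ k, w k * frobeniusInner A (B k) := by
  simp only [frobeniusInner, Matrix.sum_apply, Matrix.smul_apply, smul_eq_mul, mul_sum]
  calc _ = ∑ i, ∑ k, ∑ j, w k * (A i j * B k i j) := sum_congr rfl fun i _ => by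
          rw [sum_comm]; exact sum_congr rfl fun k _ => sum_congr rfl fun j _ => by ring
    _ = _ := sum_comm

lemma frobeniusInner_vecMulVec_self (A : Matrix n n ℝ) (u : n → ℝ) :
    frobeniusInner A (vecMulVec u u) = u ⬝ᵥ A *ᵥ u := by
  simp only [frobeniusInner, vecMulVec_apply, dotProduct, mulVec, mul_sum]
  exact sum_congr rfl fun i _ => sum_congr rfl fun j _ => by ring

lemma frobeniusInner_smul_one [DecidableEq n] (A : Matrix n n ℝ) (γ : ℝ) :
    frobeniusInner A (γ • 1) = γ * A.trace := by
  simp [frobeniusInner, trace, one_apply, mul_sum, mul_comm]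

lemma frobeniusInner_sum_smul_vecMulVec (A : Matrix n n ℝ) (w : ι → ℝ) (v : ι → n → ℝ) :
    frobeniusInner A (∑ k, w k • vecMulVec (v k) (v k)) = ∑ k, w k * (v k ⬝ᵥ A *ᵥ v k) := by
  simp only [frobeniusInner_sum_smul, frobeniusInner_vecMulVec_self]

lemma posSemidef_sum_smul_vecMulVec {w : ι → ℝ} (hw : ∀ k, 0 ≤ w k) (v : ι → n → ℝ) :
    (∑ k, w k • vecMulVec (v k) (v k)).PosSemidef :=
  posSemidef_sum _ fun k _ => by
    simpa using (posSemidef_vecMulVec_self_star (v k)).smul (hw k)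

lemma PosSemidef.frobeniusInner_sum_smul_vecMulVec_nonneg {A : Matrix n n ℝ}
    (hA : A.PosSemidef) {w : ι → ℝ} (hw : ∀ k, 0 ≤ w k) (v : ι → n → ℝ) :
    0 ≤ frobeniusInner A (∑ k, w k • vecMulVec (v k) (v k)) := by
  rw [frobeniusInner_sum_smul_vecMulVec]
  exact sum_nonneg fun k _ =>
    mul_nonneg (hw k) (by simpa using hA.dotProduct_mulVec_nonneg (v k))

lemma sum_smul_vecMulVec_mulVec_of_orthonormal [DecidableEq ι] {v : ι → n → ℝ}
    (hv : ∀ k l, v k ⬝ᵥ v l = if k = l then 1 else 0) (w : ι → ℝ) (l : ι) :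
    (∑ k, w k • vecMulVec (v k) (v k)) *ᵥ v l = w l • v l := by
  simp [sum_mulVec, smul_mulVec, vecMulVec_mulVec, hv]

lemma frobeniusInner_sum_smul_vecMulVec_of_orthonormal [DecidableEq ι] {v : ι → n → ℝ}
    (hv : ∀ k l, v k ⬝ᵥ v l = if k = l then 1 else 0) (c w : ι → ℝ) :
    frobeniusInner (∑ k, c k • vecMulVec (v k) (v k)) (∑ k, w k • vecMulVec (v k) (v k)) =
      ∑ k, w k * c k := by
  simp [frobeniusInner_sum_smul_vecMulVec, sum_smul_vecMulVec_mulVec_of_orthonormal hv, hv]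

lemma sum_vecMulVec_self_eq_one_of_orthonormal [DecidableEq n] {v : n → n → ℝ}
    (hv : ∀ k l, v k ⬝ᵥ v l = if k = l then 1 else 0) :
    ∑ k, vecMulVec (v k) (v k) = 1 := by
  have hrows : of v * (of v)ᵀ = 1 := by
    ext k l
    simpa [mul_apply, one_apply, dotProduct] using hv k l
  rw [← mul_eq_one_comm.mp hrows]
  ext i j
  simp [mul_apply, Matrix.sum_apply, vecMulVec_apply]

noncomputable def tracePenalizedLoss (S : Matrix n n ℝ) (γ : ℝ) (A : Matrix n n ℝ) : ℝ :=
  (1 / 2) * (∑ k, ∑ l, (A k l - S k l) ^ 2) + γ * A.trace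

lemma tracePenalizedLoss_sub_tracePenalizedLoss [DecidableEq n] (S : Matrix n n ℝ) (γ : ℝ)
    (A B : Matrix n n ℝ) :
    tracePenalizedLoss S γ A - tracePenalizedLoss S γ B =
      (1 / 2) * (∑ k, ∑ l, (A k l - B k l) ^ 2) + frobeniusInner A (B - S + γ • 1) -
        frobeniusInner B (B - S + γ • 1) := by
  simp only [tracePenalizedLoss, ← frobeniusInner_smul_one, frobeniusInner, mul_sum,
    ← sum_sub_distrib, ← sum_add_distrib]
  refine sum_congr rfl fun k _ => sum_congr rfl fun l _ => ?_
  simp only [Matrix.add_apply, Matrix.sub_apply]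
  ring

lemma tracePenalizedLoss_le_of_frobeniusInner [DecidableEq n] {S B A : Matrix n n ℝ} {γ : ℝ}
    (hB : frobeniusInner B (B - S + γ • 1) = 0) (hA : 0 ≤ frobeniusInner A (B - S + γ • 1)) :
    tracePenalizedLoss S γ B ≤ tracePenalizedLoss S γ A := by
  have hsq : 0 ≤ ∑ k, ∑ l, (A k l - B k l) ^ 2 :=
    sum_nonneg fun k _ => sum_nonneg fun l _ => sq_nonneg _
  linarith [tracePenalizedLoss_sub_tracePenalizedLoss S γ A B]

end Matrix

lemma max_sub_zero_sub_add (a b : ℝ) : max (a - b) 0 - a + b = max (b - a) 0 := by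
  rcases le_total a b with h | h
  · simp [h]; ring
  · simp [h]

lemma max_sub_zero_mul_max_sub_zero (a b : ℝ) : max (a - b) 0 * max (b - a) 0 = 0 := by
  rcases le_total a b with h | h <;> simp [h]

theorem stmt13_general {d : ℕ} (lam : Fin d → ℝ)
    (v : Fin d → (Fin d → ℝ))
    (horth : ∀ k l, dotProduct (v k) (v l) = if k = l then (1 : ℝ) else 0)
    (Shat : Matrix (Fin d) (Fin d) ℝ)
    (hS : Shat = ∑ k, lam k • Matrix.vecMulVec (v k) (v k))
    (γ : ℝ) :
    (∑ j, max (lam j - γ) 0 • Matrix.vecMulVec (v j) (v j)).PosSemidef ∧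
      ∀ A : Matrix (Fin d) (Fin d) ℝ, A.PosSemidef →
        (1 / 2) * (∑ k, ∑ l,
              ((∑ j, max (lam j - γ) 0 • Matrix.vecMulVec (v j) (v j)) k l - Shat k l) ^ 2)
            + γ * (∑ j, max (lam j - γ) 0 • Matrix.vecMulVec (v j) (v j)).trace
          ≤ (1 / 2) * (∑ k, ∑ l, (A k l - Shat k l) ^ 2) + γ * A.trace := by
  have hgrad : (∑ j, max (lam j - γ) 0 • vecMulVec (v j) (v j)) - Shat + γ • 1 =
      ∑ j, max (γ - lam j) 0 • vecMulVec (v j) (v j) := by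
    rw [hS, ← sum_vecMulVec_self_eq_one_of_orthonormal horth, smul_sum, ← sum_sub_distrib,
      ← sum_add_distrib]
    simp only [← sub_smul, ← add_smul, max_sub_zero_sub_add]
  refine ⟨posSemidef_sum_smul_vecMulVec (fun j => le_max_right _ _) v, fun A hA => ?_⟩
  refine tracePenalizedLoss_le_of_frobeniusInner (S := Shat) ?_ ?_
  · rw [hgrad, frobeniusInner_sum_smul_vecMulVec_of_orthonormal horth]
    simp only [mul_comm (max (γ - _) 0), max_sub_zero_mul_max_sub_zero, sum_const_zero]
  · rw [hgrad]
    exact hA.frobeniusInner_sum_smul_vecMulVec_nonneg (fun j => le_max_right _ _) v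

theorem stmt13 {d : ℕ} (lam : Fin d → ℝ) (hlam : Antitone lam)
    (v : Fin d → (Fin d → ℝ))
    (horth : ∀ k l, dotProduct (v k) (v l) = if k = l then (1 : ℝ) else 0)
    (Shat : Matrix (Fin d) (Fin d) ℝ)
    (hS : Shat = ∑ k, lam k • Matrix.vecMulVec (v k) (v k))
    (γ : ℝ) (hγ : 0 < γ) :
    (∑ j, max (lam j - γ) 0 • Matrix.vecMulVec (v j) (v j)).PosSemidef ∧
      ∀ A : Matrix (Fin d) (Fin d) ℝ, A.PosSemidef →
        (1 / 2) * (∑ k, ∑ l,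
              ((∑ j, max (lam j - γ) 0 • Matrix.vecMulVec (v j) (v j)) k l - Shat k l) ^ 2)
            + γ * (∑ j, max (lam j - γ) 0 • Matrix.vecMulVec (v j) (v j)).trace
          ≤ (1 / 2) * (∑ k, ∑ l, (A k l - Shat k l) ^ 2) + γ * A.trace :=
  stmt13_general lam v horth Shat hS γ
end

section
/- Let L : ℝ^{d×d} → ℝ be a convex differentiable function, λ > 0, and let Θ̂ be a minimizer of Θ ↦ L(Θ) + λ‖Θ‖_{ℓ₁} where ‖Θ‖_{ℓ₁} = ∑_{k≠ℓ} |Θ_{kℓ}|. Let Θ* be any matrix with support S = supp(Θ*) (including the diagonal in S). If λ ≥ 2‖∇L(Θ*)‖_max, then ‖(Θ̂ − Θ*)_{S^c}‖_{ℓ₁} ≤ 3‖(Θ̂ − Θ*)_{S}‖_{ℓ₁}. -/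
open Finset

theorem stmt14 {d : ℕ} (L : Matrix (Fin d) (Fin d) ℝ → ℝ)
    (hconv : ConvexOn ℝ Set.univ L)
    (G : Matrix (Fin d) (Fin d) ℝ → Matrix (Fin d) (Fin d) ℝ)
    (hG : ∀ Θ H, HasDerivAt (fun t : ℝ => L (Θ + t • H)) (∑ k, ∑ l, G Θ k l * H k l) 0)
    (lam : ℝ) (hlam0 : 0 < lam)
    (Θstar Θhat : Matrix (Fin d) (Fin d) ℝ)
    (hmin : ∀ Θ : Matrix (Fin d) (Fin d) ℝ,
      L Θhat + lam * ∑ p ∈ Finset.univ.filter (fun p : Fin d × Fin d => p.1 ≠ p.2),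
          |Θhat p.1 p.2|
        ≤ L Θ + lam * ∑ p ∈ Finset.univ.filter (fun p : Fin d × Fin d => p.1 ≠ p.2),
            |Θ p.1 p.2|)
    (hlam : ∀ k l, 2 * |G Θstar k l| ≤ lam) :
    ∑ p ∈ Finset.univ.filter
        (fun p : Fin d × Fin d => ¬(Θstar p.1 p.2 ≠ 0 ∨ p.1 = p.2)),
        |Θhat p.1 p.2 - Θstar p.1 p.2|
      ≤ 3 * ∑ p ∈ Finset.univ.filter
          (fun p : Fin d × Fin d => Θstar p.1 p.2 ≠ 0 ∨ p.1 = p.2),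
          |Θhat p.1 p.2 - Θstar p.1 p.2| := by
  classical
  set Δ : Matrix (Fin d) (Fin d) ℝ := Θhat - Θstar with hΔdef
  have hΔ : ∀ k l, Δ k l = Θhat k l - Θstar k l := fun k l => rfl
  set gm : ℝ := ∑ k, ∑ l, G Θstar k l * Δ k l with hgm
  -- convexity step: gm ≤ L Θhat - L Θstar
  have hsum : Θstar + (1:ℝ) • Δ = Θhat := by
    simp [hΔdef]
  have key : gm ≤ L Θhat - L Θstar := by
    have hd := hG Θstar Δ
    rw [hasDerivAt_iff_tendsto_slope] at hd
    have hd' : Filter.Tendsto (slope (fun t : ℝ => L (Θstar + t • Δ)) 0)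
        (nhdsWithin 0 (Set.Ioi 0)) (nhds gm) :=
      hd.mono_left (nhdsWithin_mono _ (fun x hx => ne_of_gt hx))
    refine le_of_tendsto hd' ?_
    filter_upwards [Ioc_mem_nhdsGT_of_mem (Set.left_mem_Ico.mpr one_pos)] with t ht
    have ht0 : (0:ℝ) < t := ht.1
    have ht1 : t ≤ 1 := ht.2
    have h := hconv.2 (Set.mem_univ Θstar) (Set.mem_univ Θhat)
      (by linarith : (0:ℝ) ≤ 1 - t) (le_of_lt ht0) (by ring)
    have heq : (1 - t) • Θstar + t • Θhat = Θstar + t • Δ := by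
      simp [hΔdef, smul_sub, sub_smul]
      abel
    rw [heq] at h
    rw [slope_def_field]
    rw [zero_smul, add_zero, sub_zero]
    rw [div_le_iff₀ ht0]
    simp only [smul_eq_mul] at h
    nlinarith [h]
  -- Hölder step
  have holder : -gm ≤ lam / 2 * ∑ p : Fin d × Fin d, |Δ p.1 p.2| := by
    have : -gm ≤ ∑ k, ∑ l, lam / 2 * |Δ k l| := by
      rw [hgm, ← Finset.sum_neg_distrib]
      refine Finset.sum_le_sum (fun k _ => ?_)
      rw [← Finset.sum_neg_distrib]
      refine Finset.sum_le_sum (fun l _ => ?_)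
      have h1 := hlam k l
      have h2 : -(G Θstar k l * Δ k l) ≤ |G Θstar k l| * |Δ k l| := by
        rw [← abs_mul]; exact neg_le_abs _
      nlinarith [abs_nonneg (Δ k l)]
    calc -gm ≤ ∑ k, ∑ l, lam / 2 * |Δ k l| := this
      _ = lam / 2 * ∑ p : Fin d × Fin d, |Δ p.1 p.2| := by
          rw [Fintype.sum_prod_type, Finset.mul_sum]
          exact Finset.sum_congr rfl (fun k _ => by rw [Finset.mul_sum])
  -- notation
  set cond : Fin d × Fin d → Prop := fun p => Θstar p.1 p.2 ≠ 0 ∨ p.1 = p.2 with hcond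
  set A : ℝ := ∑ p ∈ Finset.univ.filter (fun p => ¬ cond p), |Δ p.1 p.2| with hA
  set B : ℝ := ∑ p ∈ Finset.univ.filter cond, |Δ p.1 p.2| with hB
  have habs : ∀ p : Fin d × Fin d, |Θhat p.1 p.2 - Θstar p.1 p.2| = |Δ p.1 p.2| :=
    fun p => rfl
  have hsumAB : ∑ p : Fin d × Fin d, |Δ p.1 p.2| = B + A := by
    rw [hA, hB, Finset.sum_filter_add_sum_filter_not]
  -- minimality step
  have hmin' := hmin Θstar
  set Off := Finset.univ.filter (fun p : Fin d × Fin d => p.1 ≠ p.2) with hOff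
  set O1 := Off.filter (fun p => Θstar p.1 p.2 ≠ 0) with hO1
  set O2 := Off.filter (fun p => ¬ Θstar p.1 p.2 ≠ 0) with hO2
  have hOsplit : ∀ f : Fin d × Fin d → ℝ,
      ∑ p ∈ Off, f p = ∑ p ∈ O1, f p + ∑ p ∈ O2, f p := by
    intro f
    rw [hO1, hO2, Finset.sum_filter_add_sum_filter_not]
  have hO2Sc : O2 = Finset.univ.filter (fun p => ¬ cond p) := by
    ext p
    simp only [hO2, hOff, hcond, Finset.mem_filter, Finset.mem_univ, true_and]
    tauto
  have hO2zero : ∀ p ∈ O2, Θstar p.1 p.2 = 0 := by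
    intro p hp
    rw [hO2, Finset.mem_filter] at hp
    exact not_not.mp hp.2
  -- bound: L Θhat - L Θstar ≤ lam * (B' - A)  where B' = ∑_{O1} |Δ|
  set B' : ℝ := ∑ p ∈ O1, |Δ p.1 p.2| with hB'
  have hmin2 : L Θhat - L Θstar ≤ lam * (B' - A) := by
    have hdiff : (∑ p ∈ Off, |Θstar p.1 p.2|) - ∑ p ∈ Off, |Θhat p.1 p.2| ≤ B' - A := by
      rw [hOsplit (fun p => |Θstar p.1 p.2|), hOsplit (fun p => |Θhat p.1 p.2|)]
      have h1 : ∑ p ∈ O1, |Θstar p.1 p.2| - ∑ p ∈ O1, |Θhat p.1 p.2| ≤ B' := by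
        rw [hB', ← Finset.sum_sub_distrib]
        refine Finset.sum_le_sum (fun p _ => ?_)
        have h3 := abs_sub_abs_le_abs_sub (Θstar p.1 p.2) (Θhat p.1 p.2)
        have h4 : |Δ p.1 p.2| = |Θstar p.1 p.2 - Θhat p.1 p.2| := by
          rw [hΔ, abs_sub_comm]
        linarith
      have h2 : ∑ p ∈ O2, |Θstar p.1 p.2| - ∑ p ∈ O2, |Θhat p.1 p.2| = -A := by
        have hz : ∑ p ∈ O2, |Θstar p.1 p.2| = 0 :=
          Finset.sum_eq_zero (fun p hp => by rw [hO2zero p hp, abs_zero])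
        have hh : ∑ p ∈ O2, |Θhat p.1 p.2| = A := by
          rw [hA, ← hO2Sc]
          refine Finset.sum_congr rfl (fun p hp => ?_)
          rw [hΔ, hO2zero p hp, sub_zero]
        rw [hz, hh]; ring
      linarith
    have := hmin'
    nlinarith [hdiff]
  -- B' ≤ B
  have hB'B : B' ≤ B := by
    refine Finset.sum_le_sum_of_subset_of_nonneg ?_ (fun p _ _ => abs_nonneg _)
    intro p hp
    rw [hO1, Finset.mem_filter] at hp
    simp only [Finset.mem_filter, Finset.mem_univ, true_and, hcond]
    exact Or.inl hp.2
  -- combine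
  have hAnn : 0 ≤ A := Finset.sum_nonneg (fun p _ => abs_nonneg _)
  have hfinal : A ≤ 3 * B := by
    rw [hsumAB] at holder
    nlinarith [key, hmin2, hB'B, holder]
  calc ∑ p ∈ Finset.univ.filter (fun p : Fin d × Fin d => ¬ cond p),
        |Θhat p.1 p.2 - Θstar p.1 p.2| = A := by
        rw [hA]; exact Finset.sum_congr rfl (fun p _ => habs p)
    _ ≤ 3 * B := hfinal
    _ = 3 * ∑ p ∈ Finset.univ.filter cond, |Θhat p.1 p.2 - Θstar p.1 p.2| := by
        rw [hB]
        exact congrArg (fun x => 3 * x)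
          (Finset.sum_congr rfl (fun p _ => (habs p).symm))
end
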